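/- Admissible substitution principle for sorts: in a well-formed generalized algebraic theory 𝕋, if ψ is a well-formed substitution from telescope Φ to telescope Ψ (Φ ⊢ ψ : Ψ) and A is a well-formed sort in context Ψ (Ψ ⊢ A sort), then A[ψ] is a well-formed sort in context Φ (Φ ⊢ A[ψ] sort). -/

import Mathlib

-- Raw syntax of generalized algebraic theories: terms are variables or operator
-- applications `ϑ⟦ψ⟧`, substitutions are lists of term/variable assignments.
mutual
inductive Tm : Type
  | var : ℕ → Tm
  | op : ℕ → Subst → Tm
inductive Subst : Type
  | nil : Subst
  | snoc : Subst → Tm → ℕ → Subst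
end

-- Raw sorts: `A = ϑ⟦ψ⟧` for a sort symbol `ϑ`.
inductive Srt : Type
  | cut : ℕ → Subst → Srt

-- Substitution action and composition, by mutual structural recursion.
mutual
def Tm.subst : Tm → Subst → Tm
  | .var x, .nil => .var x
  | .var x, .snoc ψ M y => if y = x then M else Tm.subst (.var x) ψ
  | .op ϑ φ, ψ => .op ϑ (Subst.comp φ ψ)
def Subst.comp : Subst → Subst → Subst
  | .nil, _ => .nil
  | .snoc φ N x, ψ => .snoc (Subst.comp φ ψ) (Tm.subst N ψ) x
end

def Srt.subst : Srt → Subst → Srt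
  | .cut ϑ φ, ψ => .cut ϑ (Subst.comp φ ψ)

-- Telescopes: lists of (variable, sort) declarations (most recent first).
abbrev Tele := List (ℕ × Srt)

-- Theory entries: sort declarations, operation declarations, sort axioms, term axioms.
inductive Entry : Type
  | sortDecl (ϑ : ℕ) (Ψ : Tele)
  | opDecl (ϑ : ℕ) (Ψ : Tele) (A : Srt)
  | sortAx (Ψ : Tele) (A B : Srt)
  | termAx (Ψ : Tele) (M N : Tm) (A : Srt)

-- A theory is a list of entries (most recent first).
abbrev Thy := List Entry

def Entry.name : Entry → Option ℕ
  | .sortDecl ϑ _ => some ϑ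
  | .opDecl ϑ _ _ => some ϑ
  | _ => none

-- The mutually inductive judgments of a generalized algebraic theory:
-- well-formed telescopes, sorts, terms and substitutions, and the
-- corresponding equality judgments.
mutual
inductive IsTele : Thy → Tele → Prop
  | nil : IsTele T []
  | snoc : IsTele T Ψ → IsSrt T Ψ A → x ∉ Ψ.map Prod.fst → IsTele T ((x, A) :: Ψ)
inductive IsSrt : Thy → Tele → Srt → Prop
  | form : Entry.sortDecl ϑ Φ ∈ T → IsSubst T Ψ φ Φ → IsSrt T Ψ (.cut ϑ φ)
inductive EqSrt : Thy → Tele → Srt → Srt → Prop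
  | refl : IsSrt T Ψ A → EqSrt T Ψ A A
  | symm : EqSrt T Ψ A₀ A₁ → EqSrt T Ψ A₁ A₀
  | trans : EqSrt T Ψ A₀ A₁ → EqSrt T Ψ A₁ A₂ → EqSrt T Ψ A₀ A₂
  | subst : EqSrt T Φ A₀ A₁ → EqSubst T Ψ φ₀ φ₁ Φ →
      EqSrt T Ψ (A₀.subst φ₀) (A₁.subst φ₁)
  | ax : Entry.sortAx Ψ A₀ A₁ ∈ T → EqSrt T Ψ A₀ A₁
inductive IsTm : Thy → Tele → Tm → Srt → Prop
  | form : Entry.opDecl ϑ Φ A ∈ T → IsSubst T Ψ φ Φ → IsTm T Ψ (.op ϑ φ) (A.subst φ)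
  | var : IsTm T ((x, A) :: Ψ) (.var x) A
  | conv : EqSrt T Ψ A₀ A₁ → IsTm T Ψ M A₀ → IsTm T Ψ M A₁
inductive EqTm : Thy → Tele → Tm → Tm → Srt → Prop
  | refl : IsTm T Ψ M A → EqTm T Ψ M M A
  | symm : EqTm T Ψ M₀ M₁ A → EqTm T Ψ M₁ M₀ A
  | trans : EqTm T Ψ M₀ M₁ A → EqTm T Ψ M₁ M₂ A → EqTm T Ψ M₀ M₂ A
  | conv : EqTm T Ψ M₀ M₁ A₀ → EqSrt T Ψ A₀ A₁ → EqTm T Ψ M₀ M₁ A₁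
  | subst : EqTm T Φ M₀ M₁ A → EqSubst T Ψ φ₀ φ₁ Φ →
      EqTm T Ψ (M₀.subst φ₀) (M₁.subst φ₁) (A.subst φ₀)
  | ax : Entry.termAx Ψ M₀ M₁ A ∈ T → EqTm T Ψ M₀ M₁ A
inductive IsSubst : Thy → Tele → Subst → Tele → Prop
  | nil : IsSubst T Φ .nil []
  | snoc : IsSubst T Φ ψ Ψ → IsTm T Φ M (A.subst ψ) →
      IsSubst T Φ (.snoc ψ M x) ((x, A) :: Ψ)
inductive EqSubst : Thy → Tele → Subst → Subst → Tele → Prop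
  | nil : EqSubst T Φ .nil .nil []
  | snoc : EqSubst T Φ ψ₀ ψ₁ Ψ → EqTm T Φ M₀ M₁ (A.subst ψ₀) →
      EqSubst T Φ (.snoc ψ₀ M₀ x) (.snoc ψ₁ M₁ x) ((x, A) :: Ψ)
end

-- Well-formed generalized algebraic theories.
inductive IsThy : Thy → Prop
  | nil : IsThy []
  | sortDecl : IsThy T → IsTele T Ψ → (∀ e ∈ T, e.name ≠ some ϑ) →
      IsThy (.sortDecl ϑ Ψ :: T)
  | opDecl : IsThy T → IsTele T Ψ → IsSrt T Ψ A → (∀ e ∈ T, e.name ≠ some ϑ) →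
      IsThy (.opDecl ϑ Ψ A :: T)
  | sortAx : IsThy T → IsTele T Ψ → IsSrt T Ψ A₀ → IsSrt T Ψ A₁ →
      IsThy (.sortAx Ψ A₀ A₁ :: T)
  | termAx : IsThy T → IsTele T Ψ → IsSrt T Ψ A → IsTm T Ψ M₀ A → IsTm T Ψ M₁ A →
      IsThy (.termAx Ψ M₀ M₁ A :: T)


/-!
Write `A = ϑ⟦φ⟧` with `Ψ ⊢ φ : Ξ`, where `Ξ` is the telescope declared for `ϑ`; it suffices to show
`Φ ⊢ φ ∘ ψ : Ξ`. This follows by induction on the derivations of terms and substitutions over `Ψ`,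
using `B[φ][ψ] = B[φ ∘ ψ]` for every sort `B` whose variables `φ` covers (the telescopes and sorts
of a well-formed theory are scoped). The one obstacle is the variable rule `(x : D) :: Ψ₀ ⊢ x : D`,
which does not check that `D` avoids `x`: if `x` occurs in `D`, then `D[ψ₀, x ↦ N] ≠ D[ψ₀]`.

Such a variable never occurs in `φ`. Without weakening, a judgment over `(h : D) :: Γ` mentions at
most `h`, and if `D` is not closed then `h` is inert: every derivable sort is closed, and a term
mentions `h` exactly when its sort is `D` or mentions `h`. Since the sorts of a substitution into a
scoped telescope are closed, its components avoid `h`. Inertness is proved by induction over all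
the judgments at once; the axioms of the theory satisfy it because they are well formed.
-/

mutual
def Tm.fv : Tm → List ℕ
  | .var x => [x]
  | .op _ φ => φ.fv
def Subst.fv : Subst → List ℕ
  | .nil => []
  | .snoc φ M _ => φ.fv ++ M.fv
end

def Srt.fv : Srt → List ℕ
  | .cut _ φ => φ.fv

def Subst.dom : Subst → List ℕ
  | .nil => []
  | .snoc φ _ x => x :: φ.dom

def Subst.lookup (φ : Subst) (x : ℕ) : Tm := (Tm.var x).subst φ

def Tele.names (Γ : Tele) : List ℕ := Γ.map Prod.fst

-- Without a weakening rule only the head variable of a context can occur in its judgments.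
def Tele.hd (Γ : Tele) : List ℕ := Γ.names.take 1

def Tele.Scoped : Tele → Prop
  | [] => True
  | (_, A) :: Γ => A.fv ⊆ Tele.names Γ ∧ Tele.Scoped Γ

theorem Tele.hd_subset_names (Γ : Tele) : Γ.hd ⊆ Γ.names := List.take_subset _ _

@[simp] theorem Tele.hd_cons (x : ℕ) (A : Srt) (Γ : Tele) : Tele.hd ((x, A) :: Γ) = [x] := rfl

theorem List.eq_nil_of_subset_singleton {α : Type*} {l : List α} {a : α} (hl : l ⊆ [a])
    (ha : a ∉ l) : l = [] :=
  List.eq_nil_iff_forall_not_mem.2 fun _ hb => ha (List.mem_singleton.1 (hl hb) ▸ hb)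

namespace Subst

@[simp] theorem lookup_snoc_self (φ : Subst) (M : Tm) (x : ℕ) : (φ.snoc M x).lookup x = M := by
  simp [lookup, Tm.subst]

theorem lookup_snoc_of_ne {φ : Subst} {M : Tm} {x y : ℕ} (h : y ≠ x) :
    (φ.snoc M y).lookup x = φ.lookup x := by
  simp [lookup, Tm.subst, h]

theorem fv_lookup_subset {x : ℕ} : ∀ {φ : Subst}, x ∈ φ.dom → (φ.lookup x).fv ⊆ φ.fv
  | .nil, h => by simp [dom] at h
  | .snoc φ M y, h => by
      by_cases hy : y = x
      · subst hy; simp [fv]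
      · have hx : x ∈ φ.dom := by simpa [dom, Ne.symm hy] using h
        rw [lookup_snoc_of_ne hy]
        exact List.Subset.trans (fv_lookup_subset hx) (List.subset_append_left _ _)

theorem lookup_subst {x : ℕ} (ψ : Subst) : ∀ {φ : Subst}, x ∈ φ.dom →
    (φ.lookup x).subst ψ = (φ.comp ψ).lookup x
  | .nil, h => by simp [dom] at h
  | .snoc φ M y, h => by
      by_cases hy : y = x
      · subst hy; simp [comp]
      · have hx : x ∈ φ.dom := by simpa [dom, Ne.symm hy] using h
        rw [lookup_snoc_of_ne hy, comp, lookup_snoc_of_ne hy, lookup_subst ψ hx]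

end Subst

mutual
theorem Tm.mem_fv_subst {z : ℕ} : ∀ {M : Tm} {φ : Subst},
    z ∈ (M.subst φ).fv ↔ ∃ y ∈ M.fv, z ∈ (φ.lookup y).fv
  | .var _, _ => by simp [Tm.fv, Subst.lookup]
  | .op _ ρ, _ => by simpa [Tm.subst, Tm.fv] using Subst.mem_fv_comp (ρ := ρ)
theorem Subst.mem_fv_comp {z : ℕ} : ∀ {ρ φ : Subst},
    z ∈ (ρ.comp φ).fv ↔ ∃ y ∈ ρ.fv, z ∈ (φ.lookup y).fv
  | .nil, _ => by simp [Subst.comp, Subst.fv]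
  | .snoc ρ N _, _ => by
      simp only [Subst.comp, Subst.fv, List.mem_append, Subst.mem_fv_comp (ρ := ρ),
        Tm.mem_fv_subst (M := N), or_and_right, exists_or]
end

theorem Srt.mem_fv_subst {z : ℕ} {A : Srt} {φ : Subst} :
    z ∈ (A.subst φ).fv ↔ ∃ y ∈ A.fv, z ∈ (φ.lookup y).fv := by
  cases A; exact Subst.mem_fv_comp

theorem Tm.fv_subst_subset {M : Tm} {φ : Subst} (h : M.fv ⊆ φ.dom) :
    (M.subst φ).fv ⊆ φ.fv := fun _ hz =>
  let ⟨_, hy, hz⟩ := Tm.mem_fv_subst.1 hz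
  Subst.fv_lookup_subset (h hy) hz

theorem Srt.fv_subst_subset {A : Srt} {φ : Subst} (h : A.fv ⊆ φ.dom) :
    (A.subst φ).fv ⊆ φ.fv := fun _ hz =>
  let ⟨_, hy, hz⟩ := Srt.mem_fv_subst.1 hz
  Subst.fv_lookup_subset (h hy) hz

theorem Tm.fv_subst_eq_nil {M : Tm} (φ : Subst) (h : M.fv = []) : (M.subst φ).fv = [] :=
  List.eq_nil_iff_forall_not_mem.2 fun _ hz => by simp [Tm.mem_fv_subst, h] at hz

theorem Srt.fv_subst_eq_nil {A : Srt} (φ : Subst) (h : A.fv = []) : (A.subst φ).fv = [] :=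
  List.eq_nil_iff_forall_not_mem.2 fun _ hz => by simp [Srt.mem_fv_subst, h] at hz

theorem Subst.exists_mem_fv_lookup_snoc {l : List ℕ} {P : Tm} {φ : Subst} {y z : ℕ}
    (h : l ⊆ [y]) :
    (∃ y' ∈ l, z ∈ ((φ.snoc P y).lookup y').fv) ↔ y ∈ l ∧ z ∈ P.fv := by
  constructor
  · rintro ⟨y', hy', hz⟩
    obtain rfl := List.mem_singleton.1 (h hy')
    exact ⟨hy', by simpa using hz⟩
  · exact fun ⟨hy, hz⟩ => ⟨y, hy, by simpa using hz⟩

theorem Tm.mem_fv_subst_snoc {M P : Tm} {φ : Subst} {y z : ℕ} (h : M.fv ⊆ [y]) :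
    z ∈ (M.subst (φ.snoc P y)).fv ↔ y ∈ M.fv ∧ z ∈ P.fv := by
  rw [Tm.mem_fv_subst, Subst.exists_mem_fv_lookup_snoc h]

theorem Srt.mem_fv_subst_snoc {A : Srt} {P : Tm} {φ : Subst} {y z : ℕ} (h : A.fv ⊆ [y]) :
    z ∈ (A.subst (φ.snoc P y)).fv ↔ y ∈ A.fv ∧ z ∈ P.fv := by
  rw [Srt.mem_fv_subst, Subst.exists_mem_fv_lookup_snoc h]

mutual
theorem Tm.subst_subst (ψ : Subst) : ∀ {M : Tm} {φ : Subst}, M.fv ⊆ φ.dom →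
    (M.subst φ).subst ψ = M.subst (φ.comp ψ)
  | .var _, _, h => Subst.lookup_subst ψ (h (List.mem_singleton_self _))
  | .op _ ρ, _, h => by rw [Tm.subst, Tm.subst, Tm.subst, Subst.comp_assoc ψ (ρ := ρ) h]
theorem Subst.comp_assoc (ψ : Subst) : ∀ {ρ φ : Subst}, ρ.fv ⊆ φ.dom →
    (ρ.comp φ).comp ψ = ρ.comp (φ.comp ψ)
  | .nil, _, _ => by simp only [Subst.comp]
  | .snoc ρ N _, _, h => by
      rw [Subst.fv, List.append_subset] at h
      rw [Subst.comp, Subst.comp, Subst.comp, Subst.comp_assoc ψ h.1, Tm.subst_subst ψ h.2]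
end

theorem Srt.subst_subst {A : Srt} {φ : Subst} (ψ : Subst) (h : A.fv ⊆ φ.dom) :
    (A.subst φ).subst ψ = A.subst (φ.comp ψ) := by
  cases A; rw [Srt.subst, Srt.subst, Srt.subst, Subst.comp_assoc ψ h]

mutual
theorem Tm.subst_snoc_of_not_mem {φ : Subst} {N : Tm} {x : ℕ} : ∀ {M : Tm}, x ∉ M.fv →
    M.subst (φ.snoc N x) = M.subst φ
  | .var _, h => Subst.lookup_snoc_of_ne fun e => h (by simp [Tm.fv, e])
  | .op _ ρ, h => by rw [Tm.subst, Tm.subst, Subst.comp_snoc_of_not_mem (ρ := ρ) h]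
theorem Subst.comp_snoc_of_not_mem {φ : Subst} {N : Tm} {x : ℕ} :
    ∀ {ρ : Subst}, x ∉ ρ.fv → ρ.comp (φ.snoc N x) = ρ.comp φ
  | .nil, _ => by simp only [Subst.comp]
  | .snoc ρ P _, h => by
      rw [Subst.fv, List.mem_append, not_or] at h
      rw [Subst.comp, Subst.comp, Subst.comp_snoc_of_not_mem h.1, Tm.subst_snoc_of_not_mem h.2]
end

theorem Srt.subst_snoc_of_not_mem {A : Srt} {φ : Subst} {N : Tm} {x : ℕ} (h : x ∉ A.fv) :
    A.subst (φ.snoc N x) = A.subst φ := by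
  cases A; rw [Srt.subst, Srt.subst, Subst.comp_snoc_of_not_mem h]

theorem Srt.fv_subst_snoc_eq_nil {A : Srt} {P : Tm} {φ : Subst} {y : ℕ} (hA : A.fv ⊆ [y])
    (hP : P.fv = []) : (A.subst (φ.snoc P y)).fv = [] :=
  List.eq_nil_iff_forall_not_mem.2 fun _ hz => by
    simpa [hP] using ((Srt.mem_fv_subst_snoc hA).1 hz).2

theorem IsSubst.dom_eq {T : Thy} {Φ Ψ : Tele} {ψ : Subst} :
    IsSubst T Φ ψ Ψ → ψ.dom = Tele.names Ψ
  | .nil => rfl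
  | .snoc h _ => by simp [Subst.dom, Tele.names, h.dom_eq]

theorem EqSubst.dom_eq {T : Thy} {Φ Ψ : Tele} {ψ₀ ψ₁ : Subst} :
    EqSubst T Φ ψ₀ ψ₁ Ψ → ψ₀.dom = Tele.names Ψ ∧ ψ₁.dom = Tele.names Ψ
  | .nil => ⟨rfl, rfl⟩
  | .snoc h _ => by simp [Subst.dom, Tele.names, h.dom_eq]

theorem IsSubst.eqSubst_self {T : Thy} {Φ Ψ : Tele} {ψ : Subst} :
    IsSubst T Φ ψ Ψ → EqSubst T Φ ψ ψ Ψ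
  | .nil => .nil
  | .snoc h hM => .snoc h.eqSubst_self (.refl hM)

mutual
theorem IsTm.fv_subset_hd {T : Thy} {Γ : Tele} {M : Tm} {B : Srt} :
    IsTm T Γ M B → M.fv ⊆ Tele.hd Γ
  | .form _ h => h.fv_subset_hd
  | .var => by simp [Tm.fv]
  | .conv _ h => h.fv_subset_hd
theorem IsSubst.fv_subset_hd {T : Thy} {Γ Ξ : Tele} {φ : Subst} :
    IsSubst T Γ φ Ξ → φ.fv ⊆ Tele.hd Γ
  | .nil => List.nil_subset _
  | .snoc h hM => List.append_subset.2 ⟨h.fv_subset_hd, hM.fv_subset_hd⟩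
end

theorem IsSrt.fv_subset_hd {T : Thy} {Γ : Tele} {A : Srt} : IsSrt T Γ A → A.fv ⊆ Tele.hd Γ
  | .form _ h => h.fv_subset_hd

theorem IsTele.scoped {T : Thy} {Γ : Tele} : IsTele T Γ → Γ.Scoped
  | .nil => trivial
  | .snoc h hA _ => ⟨List.Subset.trans hA.fv_subset_hd (Tele.hd_subset_names _), h.scoped⟩

def Entry.Scoped : Entry → Prop
  | .sortDecl _ Ψ => Ψ.Scoped
  | .opDecl _ Ψ A => Ψ.Scoped ∧ A.fv ⊆ Tele.names Ψ
  | .sortAx Ψ A₀ A₁ => A₀.fv ⊆ Tele.hd Ψ ∧ A₁.fv ⊆ Tele.hd Ψ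
  | .termAx Ψ M₀ M₁ _ => M₀.fv ⊆ Tele.hd Ψ ∧ M₁.fv ⊆ Tele.hd Ψ

def Thy.Scoped (T : Thy) : Prop := ∀ e ∈ T, e.Scoped

theorem IsThy.scoped {T : Thy} (hT : IsThy T) : T.Scoped := by
  induction hT with
  | nil => simp [Thy.Scoped]
  | sortDecl _ hΨ _ ih => exact List.forall_mem_cons.2 ⟨hΨ.scoped, ih⟩
  | opDecl _ hΨ hA _ ih =>
    exact List.forall_mem_cons.2
      ⟨⟨hΨ.scoped, List.Subset.trans hA.fv_subset_hd (Tele.hd_subset_names _)⟩, ih⟩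
  | sortAx _ _ hA₀ hA₁ ih =>
    exact List.forall_mem_cons.2 ⟨⟨hA₀.fv_subset_hd, hA₁.fv_subset_hd⟩, ih⟩
  | termAx _ _ _ hM₀ hM₁ ih =>
    exact List.forall_mem_cons.2 ⟨⟨hM₀.fv_subset_hd, hM₁.fv_subset_hd⟩, ih⟩

theorem Tm.fv_subst_subset_of_hd {M : Tm} {φ : Subst} {Θ : Tele} (hM : M.fv ⊆ Tele.hd Θ)
    (hφ : φ.dom = Tele.names Θ) : (M.subst φ).fv ⊆ φ.fv :=
  Tm.fv_subst_subset (List.Subset.trans hM (hφ ▸ Tele.hd_subset_names Θ))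

theorem Srt.fv_subst_subset_of_hd {A : Srt} {φ : Subst} {Θ : Tele} (hA : A.fv ⊆ Tele.hd Θ)
    (hφ : φ.dom = Tele.names Θ) : (A.subst φ).fv ⊆ φ.fv :=
  Srt.fv_subst_subset (List.Subset.trans hA (hφ ▸ Tele.hd_subset_names Θ))

mutual
theorem EqTm.fv_subset_hd {T : Thy} (hT : T.Scoped) {Γ : Tele} {M₀ M₁ : Tm} {B : Srt} :
    EqTm T Γ M₀ M₁ B → M₀.fv ⊆ Tele.hd Γ ∧ M₁.fv ⊆ Tele.hd Γ
  | .refl h => ⟨h.fv_subset_hd, h.fv_subset_hd⟩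
  | .symm h => (h.fv_subset_hd hT).symm
  | .trans h₁ h₂ => ⟨(h₁.fv_subset_hd hT).1, (h₂.fv_subset_hd hT).2⟩
  | .conv h _ => h.fv_subset_hd hT
  | .subst h w =>
    ⟨List.Subset.trans (Tm.fv_subst_subset_of_hd (h.fv_subset_hd hT).1 w.dom_eq.1)
      (w.fv_subset_hd hT).1,
     List.Subset.trans (Tm.fv_subst_subset_of_hd (h.fv_subset_hd hT).2 w.dom_eq.2)
      (w.fv_subset_hd hT).2⟩
  | .ax h => hT _ h
theorem EqSubst.fv_subset_hd {T : Thy} (hT : T.Scoped) {Γ Ξ : Tele} {φ₀ φ₁ : Subst} :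
    EqSubst T Γ φ₀ φ₁ Ξ → φ₀.fv ⊆ Tele.hd Γ ∧ φ₁.fv ⊆ Tele.hd Γ
  | .nil => ⟨List.nil_subset _, List.nil_subset _⟩
  | .snoc h hM =>
    ⟨List.append_subset.2 ⟨(h.fv_subset_hd hT).1, (hM.fv_subset_hd hT).1⟩,
     List.append_subset.2 ⟨(h.fv_subset_hd hT).2, (hM.fv_subset_hd hT).2⟩⟩
end

theorem EqSrt.fv_subset_hd {T : Thy} (hT : T.Scoped) {Γ : Tele} {A₀ A₁ : Srt} :
    EqSrt T Γ A₀ A₁ → A₀.fv ⊆ Tele.hd Γ ∧ A₁.fv ⊆ Tele.hd Γ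
  | .refl h => ⟨h.fv_subset_hd, h.fv_subset_hd⟩
  | .symm h => (h.fv_subset_hd hT).symm
  | .trans h₁ h₂ => ⟨(h₁.fv_subset_hd hT).1, (h₂.fv_subset_hd hT).2⟩
  | .subst h w =>
    ⟨List.Subset.trans (Srt.fv_subst_subset_of_hd (h.fv_subset_hd hT).1 w.dom_eq.1)
      (w.fv_subset_hd hT).1,
     List.Subset.trans (Srt.fv_subst_subset_of_hd (h.fv_subset_hd hT).2 w.dom_eq.2)
      (w.fv_subset_hd hT).2⟩
  | .ax h => hT _ h

-- The sorts at which a term mentioning the head variable `h : D` can occur.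
def HeadLike (h : ℕ) (D B : Srt) : Prop := B = D ∨ h ∈ B.fv

theorem HeadLike.fv_ne_nil {h : ℕ} {D B : Srt} (hD : D.fv ≠ []) : HeadLike h D B → B.fv ≠ []
  | .inl rfl => hD
  | .inr hB => List.ne_nil_of_mem hB

theorem not_headLike_of_fv_eq_nil {h : ℕ} {D B : Srt} (hD : D.fv ≠ []) (hB : B.fv = []) :
    ¬HeadLike h D B :=
  fun hB' => hB'.fv_ne_nil hD hB

theorem HeadLike.subst_snoc {h y : ℕ} {D Dy A : Srt} {φ : Subst} {P : Tm}
    (hA : HeadLike y Dy A) (hDy : HeadLike h D (Dy.subst φ)) (hP : h ∈ P.fv) :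
    HeadLike h D (A.subst (φ.snoc P y)) := by
  by_cases hy : y ∈ A.fv
  · exact .inr (Srt.mem_fv_subst.2 ⟨y, hy, by simpa using hP⟩)
  · obtain rfl := hA.resolve_right hy
    rwa [Srt.subst_snoc_of_not_mem hy]

def Entry.HeadInert : Entry → Prop
  | .sortAx ((_, D) :: _) A₀ A₁ => D.fv ≠ [] → A₀.fv = [] ∧ A₁.fv = []
  | .termAx ((h, D) :: _) M₀ M₁ A => D.fv ≠ [] →
      (h ∈ M₀.fv ↔ HeadLike h D A) ∧ (h ∈ M₁.fv ↔ HeadLike h D A)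
  | _ => True

def Thy.HeadInert (T : Thy) : Prop := ∀ e ∈ T, e.HeadInert

mutual
theorem IsTm.mem_fv_head_iff {T : Thy} (hS : T.Scoped) (hI : T.HeadInert) {h : ℕ} {D : Srt}
    {Γ Γ₀ : Tele} (hD : D.fv ≠ []) {N : Tm} {B : Srt} :
    IsTm T Γ N B → Γ = (h, D) :: Γ₀ → (h ∈ N.fv ↔ HeadLike h D B)
  | .form m s, hΓ => by
    have hφ := s.fv_eq_nil_of_open_head hS hI hD hΓ (hS _ m).1
    have hB := List.eq_nil_of_subset_nil <| hφ ▸ Srt.fv_subst_subset (s.dom_eq ▸ (hS _ m).2)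
    simp only [Tm.fv, hφ, List.not_mem_nil, false_iff]
    exact not_headLike_of_fv_eq_nil hD hB
  | .var, hΓ => by cases hΓ; simp [Tm.fv, HeadLike]
  | .conv e d, hΓ => by
    have hB := e.fv_eq_nil_of_open_head hS hI hD hΓ
    rw [d.mem_fv_head_iff hS hI hD hΓ]
    exact iff_of_false (not_headLike_of_fv_eq_nil hD hB.1) (not_headLike_of_fv_eq_nil hD hB.2)
theorem IsSubst.fv_eq_nil_of_open_head {T : Thy} (hS : T.Scoped) (hI : T.HeadInert) {h : ℕ}
    {D : Srt} {Γ Γ₀ : Tele} (hD : D.fv ≠ []) {φ : Subst} {Ξ : Tele} :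
    IsSubst T Γ φ Ξ → Γ = (h, D) :: Γ₀ → Ξ.Scoped → φ.fv = []
  | .nil, _, _ => rfl
  | .snoc s t, hΓ, ⟨hA, hΞ⟩ => by
    have hφ := s.fv_eq_nil_of_open_head hS hI hD hΓ hΞ
    have hB := List.eq_nil_of_subset_nil <| hφ ▸ Srt.fv_subst_subset (s.dom_eq ▸ hA)
    have hM : h ∉ _ := (t.mem_fv_head_iff hS hI hD hΓ).not.2 (not_headLike_of_fv_eq_nil hD hB)
    subst hΓ
    simp [Subst.fv, hφ, List.eq_nil_of_subset_singleton t.fv_subset_hd hM]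
theorem EqSrt.fv_eq_nil_of_open_head {T : Thy} (hS : T.Scoped) (hI : T.HeadInert) {h : ℕ}
    {D : Srt} {Γ Γ₀ : Tele} (hD : D.fv ≠ []) {A₀ A₁ : Srt} :
    EqSrt T Γ A₀ A₁ → Γ = (h, D) :: Γ₀ → A₀.fv = [] ∧ A₁.fv = []
  | .refl (.form m s), hΓ =>
    have hA := s.fv_eq_nil_of_open_head hS hI hD hΓ (hS _ m)
    ⟨hA, hA⟩
  | .symm e, hΓ => (e.fv_eq_nil_of_open_head hS hI hD hΓ).symm
  | .trans e₁ e₂, hΓ =>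
    ⟨(e₁.fv_eq_nil_of_open_head hS hI hD hΓ).1, (e₂.fv_eq_nil_of_open_head hS hI hD hΓ).2⟩
  | .subst e .nil, _ =>
    have hA := e.fv_subset_hd hS
    ⟨Srt.fv_subst_eq_nil _ (List.eq_nil_of_subset_nil hA.1),
      Srt.fv_subst_eq_nil _ (List.eq_nil_of_subset_nil hA.2)⟩
  | .subst (Φ := (y, Dy) :: _) e (.snoc _ p), hΓ => by
    by_cases hDy : Dy.fv = []
    · obtain ⟨hP, hPl⟩ := p.mem_fv_head hS hI hD hΓ
      have hP₀ : h ∉ _ := mt hPl (not_headLike_of_fv_eq_nil hD (Srt.fv_subst_eq_nil _ hDy))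
      have hP₁ : h ∉ _ := mt hP.2 hP₀
      subst hΓ
      obtain ⟨hA₀, hA₁⟩ := e.fv_subset_hd hS
      obtain ⟨hP₀', hP₁'⟩ := p.fv_subset_hd hS
      exact ⟨Srt.fv_subst_snoc_eq_nil hA₀ (List.eq_nil_of_subset_singleton hP₀' hP₀),
        Srt.fv_subst_snoc_eq_nil hA₁ (List.eq_nil_of_subset_singleton hP₁' hP₁)⟩
    · have hA := e.fv_eq_nil_of_open_head hS hI hDy rfl
      exact ⟨Srt.fv_subst_eq_nil _ hA.1, Srt.fv_subst_eq_nil _ hA.2⟩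
  | .ax m, hΓ => by subst hΓ; exact hI _ m hD
theorem EqTm.mem_fv_head {T : Thy} (hS : T.Scoped) (hI : T.HeadInert) {h : ℕ} {D : Srt}
    {Γ Γ₀ : Tele} (hD : D.fv ≠ []) {N₀ N₁ : Tm} {B : Srt} :
    EqTm T Γ N₀ N₁ B → Γ = (h, D) :: Γ₀ →
      (h ∈ N₀.fv ↔ h ∈ N₁.fv) ∧ (h ∈ N₀.fv → HeadLike h D B)
  | .refl d, hΓ => ⟨Iff.rfl, (d.mem_fv_head_iff hS hI hD hΓ).1⟩
  | .symm e, hΓ =>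
    have ⟨hN, hB⟩ := e.mem_fv_head hS hI hD hΓ
    ⟨hN.symm, hB ∘ hN.2⟩
  | .trans e₁ e₂, hΓ =>
    have ⟨hN, hB⟩ := e₁.mem_fv_head hS hI hD hΓ
    ⟨hN.trans (e₂.mem_fv_head hS hI hD hΓ).1, hB⟩
  | .conv e s, hΓ =>
    have ⟨hN, hB⟩ := e.mem_fv_head hS hI hD hΓ
    ⟨hN, fun hN₀ => absurd (hB hN₀)
      (not_headLike_of_fv_eq_nil hD (s.fv_eq_nil_of_open_head hS hI hD hΓ).1)⟩
  | .subst e .nil, _ => by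
    obtain ⟨hM₀, hM₁⟩ := e.fv_subset_hd hS
    simp [Tm.fv_subst_eq_nil _ (List.eq_nil_of_subset_nil hM₀),
      Tm.fv_subst_eq_nil _ (List.eq_nil_of_subset_nil hM₁)]
  | .subst (Φ := (y, Dy) :: _) e (.snoc (M₀ := P₀) _ p), hΓ => by
    obtain ⟨hM₀, hM₁⟩ := e.fv_subset_hd hS
    rw [Tm.mem_fv_subst_snoc hM₀, Tm.mem_fv_subst_snoc hM₁]
    obtain ⟨hP, hPl⟩ := p.mem_fv_head hS hI hD hΓ
    by_cases hP₀ : h ∈ P₀.fv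
    · have hDy : Dy.fv ≠ [] := fun hDy => (hPl hP₀).fv_ne_nil hD (Srt.fv_subst_eq_nil _ hDy)
      obtain ⟨hM, hMl⟩ := e.mem_fv_head hS hI hDy rfl
      exact ⟨by simp [hM, hP₀, hP.1 hP₀], fun hy => (hMl hy.1).subst_snoc (hPl hP₀) hP₀⟩
    · exact ⟨by simp [hP₀, ← hP], fun hy => absurd hy.2 hP₀⟩
  | .ax m, hΓ => by
    subst hΓ
    obtain ⟨h₀, h₁⟩ := hI _ m hD
    exact ⟨h₀.trans h₁.symm, h₀.1⟩
end

theorem IsSrt.fv_eq_nil_of_open_head {T : Thy} (hS : T.Scoped) (hI : T.HeadInert) {h : ℕ}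
    {D A : Srt} {Γ : Tele} (hD : D.fv ≠ []) : IsSrt T ((h, D) :: Γ) A → A.fv = []
  | .form m s => s.fv_eq_nil_of_open_head hS hI hD rfl (hS _ m)

theorem IsThy.headInert {T : Thy} (hT : IsThy T) : T.HeadInert := by
  induction hT with
  | nil => simp [Thy.HeadInert]
  | sortDecl _ _ _ ih | opDecl _ _ _ _ ih => exact List.forall_mem_cons.2 ⟨trivial, ih⟩
  | @sortAx T Ψ _ _ hT _ hA₀ hA₁ ih =>
    refine List.forall_mem_cons.2 ⟨?_, ih⟩
    rcases Ψ with _ | ⟨⟨h, D⟩, Γ⟩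
    · trivial
    · exact fun hD => ⟨hA₀.fv_eq_nil_of_open_head hT.scoped ih hD,
        hA₁.fv_eq_nil_of_open_head hT.scoped ih hD⟩
  | @termAx T Ψ _ _ _ hT _ _ hM₀ hM₁ ih =>
    refine List.forall_mem_cons.2 ⟨?_, ih⟩
    rcases Ψ with _ | ⟨⟨h, D⟩, Γ⟩
    · trivial
    · exact fun hD => ⟨hM₀.mem_fv_head_iff hT.scoped ih hD rfl,
        hM₁.mem_fv_head_iff hT.scoped ih hD rfl⟩

def Tele.CircularHeadFree : Tele → List ℕ → Prop
  | [], _ => True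
  | (x, D) :: _, l => x ∈ D.fv → x ∉ l

theorem Tele.CircularHeadFree.mono {Ψ : Tele} {l l' : List ℕ} (hl : l' ⊆ l)
    (hΨ : Ψ.CircularHeadFree l) : Ψ.CircularHeadFree l' := by
  rcases Ψ with _ | ⟨⟨x, D⟩, Ψ⟩
  · trivial
  · exact fun hx hx' => hΨ hx (hl hx')

theorem IsSubst.circularHeadFree {T : Thy} (hS : T.Scoped) (hI : T.HeadInert) {Ψ Ξ : Tele}
    {φ : Subst} (hφ : IsSubst T Ψ φ Ξ) (hΞ : Ξ.Scoped) : Ψ.CircularHeadFree φ.fv := by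
  rcases Ψ with _ | ⟨⟨x, D⟩, Ψ⟩
  · trivial
  · intro hx
    simp [hφ.fv_eq_nil_of_open_head hS hI (List.ne_nil_of_mem hx) rfl hΞ]

mutual
theorem IsTm.subst {T : Thy} (hS : T.Scoped) {Φ Ψ : Tele} {ψ : Subst} {M : Tm} {B : Srt} :
    IsTm T Ψ M B → Ψ.CircularHeadFree M.fv → IsSubst T Φ ψ Ψ →
      IsTm T Φ (M.subst ψ) (B.subst ψ)
  | .form m s, hM, hψ => by
    rw [Tm.subst, Srt.subst_subst ψ (s.dom_eq ▸ (hS _ m).2)]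
    exact .form m (s.comp hS (hS _ m).1 hM hψ)
  | .var, hM, .snoc _ hN => by
    have hx : _ ∉ _ := fun hx => hM hx (List.mem_singleton_self _)
    rw [Srt.subst_snoc_of_not_mem hx]
    simpa [Tm.subst] using hN
  | .conv e d, hM, hψ => .conv (e.subst hψ.eqSubst_self) (d.subst hS hM hψ)
theorem IsSubst.comp {T : Thy} (hS : T.Scoped) {Φ Ψ Ξ : Tele} {ψ φ : Subst} :
    IsSubst T Ψ φ Ξ → Ξ.Scoped → Ψ.CircularHeadFree φ.fv → IsSubst T Φ ψ Ψ →
      IsSubst T Φ (φ.comp ψ) Ξ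
  | .nil, _, _, _ => by rw [Subst.comp]; exact .nil
  | .snoc s t, ⟨hA, hΞ⟩, hφ, hψ => by
    have ht := t.subst hS (hφ.mono (List.subset_append_right _ _)) hψ
    rw [Srt.subst_subst ψ (s.dom_eq ▸ hA)] at ht
    rw [Subst.comp]
    exact .snoc (s.comp hS hΞ (hφ.mono (List.subset_append_left _ _)) hψ) ht
end

/-- Admissible substitution principle for sorts: in a well-formed generalized
algebraic theory `T`, if `Φ ⊢ ψ : Ψ` and `Ψ ⊢ A sort`, then `Φ ⊢ A[ψ] sort`. -/
theorem IsSrt.subst_admissible {T : Thy} (hT : IsThy T) {Φ Ψ : Tele} {ψ : Subst}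
    {A : Srt} (hψ : IsSubst T Φ ψ Ψ) (hA : IsSrt T Ψ A) :
    IsSrt T Φ (A.subst ψ) := by
  obtain ⟨m, hφ⟩ := hA
  have hS := hT.scoped
  exact .form m (hφ.comp hS (hS _ m) (hφ.circularHeadFree hS hT.headInert (hS _ m)) hψ)
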